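/- For θ > 1 and each k ≥ 2, the supremum defining φ_θ(k) is attained at a vector with at most two distinct nonzero values: there exist k₁, k₂ ≥ 0 with k₁ + k₂ ≤ k and x, y ≥ 0 with k₁x + k₂y = 1 such that the vector with k₁ coordinates equal to x, k₂ coordinates equal to y, and the rest zero achieves φ_θ(k). -/

import Mathlib

/-!
On `‖t‖₁ = 1` with `t ≥ 0` the objective is `(∑ tᵢ^θ)² − ∑ tᵢ^(2θ)`. At a maximiser, moving mass
between two positive coordinates shows that all positive coordinates have the same value of
`g(x) = A x^(θ-1) − x^(2θ-1)`, `A = ∑ tᵢ^θ` (the partial derivatives agree up to the factor `2θ`).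
For `θ > 1`, `g` increases and then decreases on `[0, ∞)`, so it takes each value at most twice:
the maximiser has at most two distinct nonzero coordinates, and the objective depends only on how
many coordinates take each of them.
-/

open Finset Set Function

/-- `φ_θ(k) = sup { ∑_{i ≠ j} |v i|^θ |v j|^θ : v ∈ ℝ^k, ‖v‖₁ = 1 }`. -/
noncomputable def phiVar (θ : ℝ) (k : ℕ) : ℝ :=
  ⨆ v : {v : Fin k → ℝ // ∑ i, |v i| = 1},
    ∑ i : Fin k, ∑ j : Fin k, if i ≠ j then |v.1 i| ^ θ * |v.1 j| ^ θ else 0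

theorem hasDerivAt_rpow_add_rpow_sub (e : ℝ) {p q : ℝ} (hp : 0 < p) (hq : 0 < q) :
    HasDerivAt (fun τ => τ ^ e + (p + q - τ) ^ e) (e * (p ^ (e - 1) - q ^ (e - 1))) p := by
  have h₁ := Real.hasDerivAt_rpow_const (p := e) (Or.inl hp.ne')
  have h₂ := (Real.hasDerivAt_rpow_const (x := p + q - p) (p := e)
    (Or.inl (by simpa using hq.ne'))).comp p ((hasDerivAt_id p).const_sub (p + q))
  rw [add_sub_cancel_left] at h₂
  exact (h₁.add h₂).congr_deriv (by ring)

noncomputable def marginalGain (θ A x : ℝ) : ℝ := A * x ^ (θ - 1) - x ^ (2 * θ - 1)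

theorem hasDerivAt_marginalGain (θ A : ℝ) {x : ℝ} (hx : 0 < x) :
    HasDerivAt (marginalGain θ A) (x ^ (θ - 2) * ((θ - 1) * A - (2 * θ - 1) * x ^ θ)) x := by
  have h₁ := (Real.hasDerivAt_rpow_const (p := θ - 1) (Or.inl hx.ne')).const_mul A
  have h₂ := Real.hasDerivAt_rpow_const (p := 2 * θ - 1) (Or.inl hx.ne')
  refine (h₁.sub h₂).congr_deriv ?_
  rw [show 2 * θ - 1 - 1 = (θ - 2) + θ by ring, Real.rpow_add hx, show θ - 1 - 1 = θ - 2 by ring]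
  ring

theorem continuous_marginalGain {θ : ℝ} (hθ : 1 ≤ θ) (A : ℝ) : Continuous (marginalGain θ A) :=
  (continuous_const.mul (Real.continuous_rpow_const (by linarith))).sub
    (Real.continuous_rpow_const (by linarith))

theorem eq_or_eq_or_eq_of_strictMonoOn_of_strictAntiOn {α β : Type*} [LinearOrder α]
    [Preorder β] {f : α → β} {l m : α} (hmono : StrictMonoOn f (Icc l m))
    (hanti : StrictAntiOn f (Ici m)) {a b c : α} (ha : l ≤ a) (hb : l ≤ b) (hc : l ≤ c)
    (hab : f a = f b) (hbc : f b = f c) : a = b ∨ a = c ∨ b = c := by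
  have key : ∀ x y, l ≤ x → l ≤ y → f x = f y → (x ≤ m ↔ y ≤ m) → x = y := by
    intro x y hx hy hxy hside
    by_cases hxm : x ≤ m
    · exact hmono.injOn ⟨hx, hxm⟩ ⟨hy, hside.1 hxm⟩ hxy
    · exact hanti.injOn (not_le.1 hxm).le (not_le.1 (mt hside.2 hxm)).le hxy
  have : (a ≤ m ↔ b ≤ m) ∨ (a ≤ m ↔ c ≤ m) ∨ (b ≤ m ↔ c ≤ m) := by tauto
  rcases this with h | h | h
  · exact Or.inl (key a b ha hb hab h)
  · exact Or.inr (Or.inl (key a c ha hc (hab.trans hbc) h))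
  · exact Or.inr (Or.inr (key b c hb hc hbc h))

theorem strictMonoOn_marginalGain {θ A : ℝ} (hθ : 1 ≤ θ) (hA : 0 ≤ A) :
    StrictMonoOn (marginalGain θ A) (Icc 0 (((θ - 1) * A / (2 * θ - 1)) ^ θ⁻¹)) := by
  refine strictMonoOn_of_deriv_pos (convex_Icc _ _) (continuous_marginalGain hθ A).continuousOn
    fun x hx => ?_
  rw [interior_Icc] at hx
  rw [(hasDerivAt_marginalGain θ A hx.1).deriv]
  have hK := (Real.lt_rpow_inv_iff_of_pos hx.1.le
    (div_nonneg (mul_nonneg (by linarith) hA) (by linarith)) (by linarith)).1 hx.2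
  rw [lt_div_iff₀ (by linarith)] at hK
  exact mul_pos (Real.rpow_pos_of_pos hx.1 _) (by linarith)

theorem strictAntiOn_marginalGain {θ A : ℝ} (hθ : 1 ≤ θ) (hA : 0 ≤ A) :
    StrictAntiOn (marginalGain θ A) (Ici (((θ - 1) * A / (2 * θ - 1)) ^ θ⁻¹)) := by
  have hK0 : 0 ≤ (θ - 1) * A / (2 * θ - 1) :=
    div_nonneg (mul_nonneg (by linarith) hA) (by linarith)
  refine strictAntiOn_of_deriv_neg (convex_Ici _) (continuous_marginalGain hθ A).continuousOn
    fun x hx => ?_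
  rw [interior_Ici] at hx
  have hx0 : 0 < x := (Real.rpow_nonneg hK0 _).trans_lt hx
  rw [(hasDerivAt_marginalGain θ A hx0).deriv]
  have hK := (Real.rpow_inv_lt_iff_of_pos hK0 hx0.le (by linarith)).1 hx
  rw [div_lt_iff₀ (by linarith)] at hK
  exact mul_neg_of_pos_of_neg (Real.rpow_pos_of_pos hx0 _) (by linarith)

theorem marginalGain_eq_or_eq_or_eq {θ A : ℝ} (hθ : 1 ≤ θ) (hA : 0 ≤ A) {a b c : ℝ}
    (ha : 0 ≤ a) (hb : 0 ≤ b) (hc : 0 ≤ c)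
    (hab : marginalGain θ A a = marginalGain θ A b)
    (hbc : marginalGain θ A b = marginalGain θ A c) : a = b ∨ a = c ∨ b = c :=
  eq_or_eq_or_eq_of_strictMonoOn_of_strictAntiOn (strictMonoOn_marginalGain hθ hA)
    (strictAntiOn_marginalGain hθ hA) ha hb hc hab hbc

theorem exists_two_values_of_no_three_distinct {ι : Type*} {t : ι → ℝ} (ht0 : 0 ≤ t) {i₀ : ι}
    (hi₀ : t i₀ ≠ 0)
    (h : ∀ i j l, t i ≠ 0 → t j ≠ 0 → t l ≠ 0 → t i = t j ∨ t i = t l ∨ t j = t l) :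
    ∃ x y : ℝ, x ≠ y ∧ 0 ≤ x ∧ 0 ≤ y ∧ ∀ i, t i ≠ 0 → t i = x ∨ t i = y := by
  by_cases hone : ∀ i, t i ≠ 0 → t i = t i₀
  · exact ⟨t i₀, 0, hi₀, ht0 i₀, le_rfl, fun i hi => Or.inl (hone i hi)⟩
  push Not at hone
  obtain ⟨j₀, hj₀, hne⟩ := hone
  refine ⟨t i₀, t j₀, Ne.symm hne, ht0 i₀, ht0 j₀, fun i hi => ?_⟩
  rcases h i i₀ j₀ hi hi₀ hj₀ with h' | h' | h'
  · exact Or.inl h'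
  · exact Or.inr h'
  · exact absurd h'.symm hne

section

variable {ι : Type*} [Fintype ι]

theorem isCompact_setOf_sum_abs_eq_one : IsCompact {v : ι → ℝ | ∑ i, |v i| = 1} := by
  refine Metric.isCompact_of_isClosed_isBounded (isClosed_eq (by fun_prop) continuous_const) ?_
  refine (Metric.isBounded_iff_subset_closedBall 0).2 ⟨1, fun v hv => ?_⟩
  rw [mem_closedBall_zero_iff, pi_norm_le_iff_of_nonneg zero_le_one]
  intro i
  rw [Real.norm_eq_abs, ← hv.out]
  exact single_le_sum (f := fun j => |v j|) (fun j _ => abs_nonneg _) (mem_univ i)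

variable [DecidableEq ι]

/-- `phiVar θ k` is, by definition, the supremum of `phiSum θ` over `{v | ∑ i, |v i| = 1}`. -/
noncomputable def phiSum (θ : ℝ) (v : ι → ℝ) : ℝ :=
  ∑ i, ∑ j, if i ≠ j then |v i| ^ θ * |v j| ^ θ else 0

theorem sum_sum_ite_ne_mul (a : ι → ℝ) :
    ∑ i, ∑ j, (if i ≠ j then a i * a j else 0) = (∑ i, a i) ^ 2 - ∑ i, a i ^ 2 := by
  rw [sq, sum_mul_sum, ← sum_sub_distrib]
  refine sum_congr rfl fun i _ => ?_
  have h : ∀ j, (if i ≠ j then a i * a j else 0) = a i * a j - if i = j then a i * a j else 0 :=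
    fun j => by split_ifs <;> simp_all
  rw [sum_congr rfl fun j _ => h j, sum_sub_distrib, sum_ite_eq]
  simp [sq]

theorem phiSum_eq (θ : ℝ) (v : ι → ℝ) :
    phiSum θ v = (∑ i, |v i| ^ θ) ^ 2 - ∑ i, |v i| ^ (2 * θ) := by
  rw [phiSum, sum_sum_ite_ne_mul]
  congr 2 with i
  rw [mul_comm, Real.rpow_mul (abs_nonneg _)]
  norm_cast

theorem continuous_phiSum {θ : ℝ} (hθ : 0 < θ) : Continuous (phiSum (ι := ι) θ) := by
  have h : ∀ e : ℝ, 0 < e → ∀ i, Continuous fun v : ι → ℝ => |v i| ^ e := fun e he i =>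
    (Real.continuous_rpow_const he.le).comp (continuous_abs.comp (continuous_apply i))
  simp only [funext (phiSum_eq θ)]
  exact ((continuous_finsetSum _ fun i _ => h θ hθ i).pow 2).sub
    (continuous_finsetSum _ fun i _ => h _ (by positivity) i)

theorem exists_nonneg_isMaxOn_phiSum [Nonempty ι] {θ : ℝ} (hθ : 0 < θ) :
    ∃ t : ι → ℝ, 0 ≤ t ∧ t ∈ {v : ι → ℝ | ∑ i, |v i| = 1} ∧
      IsMaxOn (phiSum θ) {v : ι → ℝ | ∑ i, |v i| = 1} t := by
  obtain ⟨i⟩ := ‹Nonempty ι›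
  obtain ⟨v, hv, hmax⟩ := isCompact_setOf_sum_abs_eq_one.exists_isMaxOn
    ⟨Pi.single i 1, by simp [Pi.single_apply, apply_ite]⟩ (continuous_phiSum hθ).continuousOn
  refine ⟨fun i => |v i|, fun i => abs_nonneg _, by simpa using hv, fun w hw => ?_⟩
  simpa [phiSum] using hmax hw

theorem sum_comp_update {α M : Type*} [AddCommGroup M] (f : α → M) (t : ι → α) (i : ι) (a : α) :
    ∑ l, f (update t i a l) = ∑ l, f (t l) + (f a - f (t i)) := by
  have h := sum_update_of_mem (mem_univ i) (f ∘ t) (f a)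
  rw [← comp_update] at h
  simp only [comp_apply] at h
  rw [h, sum_eq_add_sum_sdiff_singleton_of_mem (mem_univ i) (fun l => f (t l))]
  abel

theorem sum_comp_update_update {α M : Type*} [AddCommGroup M] (f : α → M) (t : ι → α) {i j : ι}
    (hij : i ≠ j) (a b : α) :
    ∑ l, f (update (update t i a) j b l) = ∑ l, f (t l) - f (t i) - f (t j) + (f a + f b) := by
  rw [sum_comp_update, sum_comp_update, update_of_ne hij.symm]
  abel

theorem phiSum_update_update_of_nonneg (θ : ℝ) {t : ι → ℝ} (ht0 : 0 ≤ t) {i j : ι} (hij : i ≠ j)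
    {a b : ℝ} (ha : 0 ≤ a) (hb : 0 ≤ b) :
    phiSum θ (update (update t i a) j b) =
      (∑ l, t l ^ θ - t i ^ θ - t j ^ θ + (a ^ θ + b ^ θ)) ^ 2 -
        (∑ l, t l ^ (2 * θ) - t i ^ (2 * θ) - t j ^ (2 * θ) + (a ^ (2 * θ) + b ^ (2 * θ))) := by
  rw [phiSum_eq, sum_comp_update_update (fun r => |r| ^ θ) t hij,
    sum_comp_update_update (fun r => |r| ^ (2 * θ)) t hij]
  simp only [abs_of_nonneg (ht0 _), abs_of_nonneg ha, abs_of_nonneg hb]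

theorem marginalGain_eq_of_isMaxOn {θ : ℝ} (hθ : θ ≠ 0) {t : ι → ℝ} (ht0 : 0 ≤ t)
    (ht : ∑ l, t l = 1) (hmax : IsMaxOn (phiSum θ) {v : ι → ℝ | ∑ l, |v l| = 1} t) {i j : ι}
    (hij : i ≠ j) (hi : 0 < t i) (hj : 0 < t j) :
    marginalGain θ (∑ l, t l ^ θ) (t i) = marginalGain θ (∑ l, t l ^ θ) (t j) := by
  set p := t i
  set q := t j
  set A := ∑ l, t l ^ θ
  set B := ∑ l, t l ^ (2 * θ)
  let u : ℝ → ι → ℝ := fun τ => update (update t i τ) j (p + q - τ)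
  let H : ℝ → ℝ := fun τ => (A - p ^ θ - q ^ θ + (τ ^ θ + (p + q - τ) ^ θ)) ^ 2
    - (B - p ^ (2 * θ) - q ^ (2 * θ) + (τ ^ (2 * θ) + (p + q - τ) ^ (2 * θ)))
  have hu : ∀ τ ∈ Icc 0 (p + q),
      u τ ∈ {v : ι → ℝ | ∑ l, |v l| = 1} ∧ phiSum θ (u τ) = H τ := by
    rintro τ ⟨h0, h1⟩
    have h1' : 0 ≤ p + q - τ := sub_nonneg.2 h1
    refine ⟨?_, phiSum_update_update_of_nonneg θ ht0 hij h0 h1'⟩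
    change ∑ l, |u τ l| = 1
    rw [sum_comp_update_update abs t hij]
    simp only [abs_of_nonneg (ht0 _), abs_of_nonneg h0, abs_of_nonneg h1', ht, p, q]
    ring
  have hHp : H p = phiSum θ t := by
    rw [phiSum_eq]
    simp only [H, add_sub_cancel_left, abs_of_nonneg (ht0 _)]
    ring
  have hloc : IsLocalMax H p :=
    Filter.mem_of_superset (Icc_mem_nhds hi (lt_add_of_pos_right p hj)) fun τ hτ => by
      change H τ ≤ H p
      rw [← (hu τ hτ).2, hHp]
      exact hmax (hu τ hτ).1
  have hderiv : HasDerivAt H (2 * θ * (marginalGain θ A p - marginalGain θ A q)) p := by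
    have h₁ := ((hasDerivAt_rpow_add_rpow_sub θ hi hj).const_add (A - p ^ θ - q ^ θ)).pow 2
    have h₂ := (hasDerivAt_rpow_add_rpow_sub (2 * θ) hi hj).const_add
      (B - p ^ (2 * θ) - q ^ (2 * θ))
    refine (h₁.sub h₂).congr_deriv ?_
    simp only [marginalGain, add_sub_cancel_left]
    norm_num
    ring
  simpa [hθ, sub_eq_zero] using hloc.hasDerivAt_eq_zero hderiv

theorem exists_two_values_of_isMaxOn {θ : ℝ} (hθ : 1 < θ) {t : ι → ℝ} (ht0 : 0 ≤ t)
    (ht : ∑ l, t l = 1) (hmax : IsMaxOn (phiSum θ) {v : ι → ℝ | ∑ l, |v l| = 1} t) :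
    ∃ x y : ℝ, x ≠ y ∧ 0 ≤ x ∧ 0 ≤ y ∧ ∀ i, t i ≠ 0 → t i = x ∨ t i = y := by
  have hgain : ∀ i j, t i ≠ 0 → t j ≠ 0 → marginalGain θ (∑ l, t l ^ θ) (t i) =
      marginalGain θ (∑ l, t l ^ θ) (t j) := by
    intro i j hi hj
    rcases eq_or_ne i j with rfl | hij
    · rfl
    exact marginalGain_eq_of_isMaxOn (by linarith) ht0 ht hmax hij ((ht0 i).lt_of_ne' hi)
      ((ht0 j).lt_of_ne' hj)
  obtain ⟨i₀, hi₀⟩ : ∃ i, t i ≠ 0 := by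
    by_contra! h
    simp [h] at ht
  exact exists_two_values_of_no_three_distinct ht0 hi₀ fun i j l hi hj hl =>
    marginalGain_eq_or_eq_or_eq hθ.le (sum_nonneg fun l _ => Real.rpow_nonneg (ht0 l) θ)
      (ht0 i) (ht0 j) (ht0 l) (hgain i j hi hj) (hgain j l hj hl)

end

section

variable {ι α M : Type*} [Fintype ι] [DecidableEq α] [AddCommMonoid M] {t : ι → α} {x y : α}

theorem card_filter_eq_add_card_filter_eq_le (hxy : x ≠ y) :
    #{i | t i = x} + #{i | t i = y} ≤ Fintype.card ι := by
  classical
  rw [← card_union_of_disjoint (disjoint_filter.2 fun i _ hx hy => hxy (hx.symm.trans hy))]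
  exact card_le_univ _

theorem sum_comp_eq_card_nsmul_add_card_nsmul [Zero α] (hxy : x ≠ y)
    (hval : ∀ i, t i ≠ 0 → t i = x ∨ t i = y) (f : α → M) (hf : f 0 = 0) :
    ∑ i, f (t i) = #{i | t i = x} • f x + #{i | t i = y} • f y := by
  have hpt : ∀ i, f (t i) = (if t i = x then f x else 0) + (if t i = y then f y else 0) := by
    intro i
    by_cases hx : t i = x
    · simp [hx, hxy]
    by_cases hy : t i = y
    · simp [hy, hxy.symm]
    have h0 : t i = 0 := by
      by_contra h0
      exact (hval i h0).elim hx hy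
    rw [h0] at hx hy ⊢
    simp [hx, hy, hf]
  simp only [hpt, sum_add_distrib, ← sum_filter, sum_const]

end

def twoValueVec {α : Type*} [Zero α] (k k₁ k₂ : ℕ) (x y : α) : Fin k → α :=
  fun i => if (i : ℕ) < k₁ then x else if (i : ℕ) < k₁ + k₂ then y else 0

theorem sum_comp_twoValueVec {α M : Type*} [Zero α] [AddCommMonoid M] {k k₁ k₂ : ℕ}
    (h : k₁ + k₂ ≤ k) (x y : α) (f : α → M) (hf : f 0 = 0) :
    ∑ i, f (twoValueVec k k₁ k₂ x y i) = k₁ • f x + k₂ • f y := by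
  unfold twoValueVec
  rw [Fin.sum_univ_eq_sum_range
      (fun n => f (if n < k₁ then x else if n < k₁ + k₂ then y else 0)),
    ← sum_range_add_sum_Ico _ h, ← sum_range_add_sum_Ico _ (Nat.le_add_right k₁ k₂),
    sum_congr (rfl : range k₁ = _) (g := fun _ => f x) fun n hn => by simp [mem_range.1 hn],
    sum_congr (rfl : Finset.Ico k₁ (k₁ + k₂) = _) (g := fun _ => f y) fun n hn => by
      obtain ⟨h₁, h₂⟩ := mem_Ico.1 hn; simp [not_lt.2 h₁, h₂],
    sum_congr (rfl : Finset.Ico (k₁ + k₂) k = _) (g := fun _ => 0) fun n hn => by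
      obtain ⟨h₁, -⟩ := mem_Ico.1 hn; simp [show ¬ n < k₁ by omega, not_lt.2 h₁, hf]]
  simp

theorem phiSum_twoValueVec_card_eq {θ : ℝ} (hθ : 0 < θ) {k : ℕ} {t : Fin k → ℝ} {x y : ℝ}
    (hxy : x ≠ y) (hval : ∀ i, t i ≠ 0 → t i = x ∨ t i = y) :
    phiSum θ (twoValueVec k #{i | t i = x} #{i | t i = y} x y) = phiSum θ t := by
  have hle : #{i | t i = x} + #{i | t i = y} ≤ k := by
    simpa using card_filter_eq_add_card_filter_eq_le (t := t) hxy
  have hzero : ∀ e : ℝ, 0 < e → |(0 : ℝ)| ^ e = 0 := fun e he => by simp [he.ne']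
  have h2θ : 0 < 2 * θ := by positivity
  rw [phiSum_eq, phiSum_eq,
    sum_comp_twoValueVec hle x y (fun r => |r| ^ θ) (hzero θ hθ),
    sum_comp_twoValueVec hle x y (fun r => |r| ^ (2 * θ)) (hzero _ h2θ),
    sum_comp_eq_card_nsmul_add_card_nsmul hxy hval (fun r => |r| ^ θ) (hzero θ hθ),
    sum_comp_eq_card_nsmul_add_card_nsmul hxy hval (fun r => |r| ^ (2 * θ)) (hzero _ h2θ)]

/-- For `θ > 1` and `k ≥ 2`, the supremum defining `φ_θ(k)` is attained at a vector
taking at most two distinct nonzero values: `k₁` coordinates equal to `x`, `k₂`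
coordinates equal to `y`, and the remaining coordinates zero. -/
theorem phiVar_attained_two_values (θ : ℝ) (hθ : 1 < θ) (k : ℕ) (hk : 2 ≤ k) :
    ∃ (k₁ k₂ : ℕ) (x y : ℝ), k₁ + k₂ ≤ k ∧ 0 ≤ x ∧ 0 ≤ y ∧
      (k₁ : ℝ) * x + (k₂ : ℝ) * y = 1 ∧
      (∑ i : Fin k, ∑ j : Fin k,
          if i ≠ j then
            |(if (i : ℕ) < k₁ then x else if (i : ℕ) < k₁ + k₂ then y else 0)| ^ θ *
              |(if (j : ℕ) < k₁ then x else if (j : ℕ) < k₁ + k₂ then y else 0)| ^ θ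
          else 0) = phiVar θ k := by
  have : Nonempty (Fin k) := ⟨⟨0, by omega⟩⟩
  obtain ⟨t, ht0, ht1, hmax⟩ := exists_nonneg_isMaxOn_phiSum (ι := Fin k) (by linarith : 0 < θ)
  have hsum : ∑ i, t i = 1 := by simpa [abs_of_nonneg (ht0 _)] using ht1
  obtain ⟨x, y, hxy, hx, hy, hval⟩ := exists_two_values_of_isMaxOn hθ ht0 hsum hmax
  refine ⟨#{i | t i = x}, #{i | t i = y}, x, y,
    by simpa using card_filter_eq_add_card_filter_eq_le (t := t) hxy, hx, hy, ?_, ?_⟩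
  · simpa [nsmul_eq_mul] using
      (sum_comp_eq_card_nsmul_add_card_nsmul hxy hval (fun r : ℝ => r) rfl).symm.trans hsum
  · exact (phiSum_twoValueVec_card_eq (by linarith) hxy hval).trans (hmax.iSup_eq ht1).symm
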